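/- arXiv:2505.01572 — 3 statements merged into one kernel-verified Lean document; each statement's English description precedes it below -/
import Mathlib

section
/- Let α be a real number with 0 < α < 1, and for a positive integer γ let T(α,γ) = (1 - ρ*(γ)) + ρ*(γ)·(1 - α^(γ+1))/(1 - α), where ρ*(γ) = α / (1 - α^(γ+1) + α). Then T(α,γ) is strictly increasing in γ: for all positive integers γ₁ < γ₂, T(α,γ₁) < T(α,γ₂). -/
/-- The PipeSpec steady-state verification probability `ρ*(γ) = α / (1 - α^(γ+1) + α)`. -/
noncomputable def rhoStar (α : ℝ) (γ : ℕ) : ℝ := α / (1 - α ^ (γ + 1) + α)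

/-- The PipeSpec expected tokens per step
`T(α,γ) = (1 - ρ*(γ)) + ρ*(γ)·(1 - α^(γ+1))/(1 - α)`. -/
noncomputable def pipeSpecT (α : ℝ) (γ : ℕ) : ℝ :=
  (1 - rhoStar α γ) + rhoStar α γ * ((1 - α ^ (γ + 1)) / (1 - α))

/-- For `0 < α < 1`, the PipeSpec expected tokens per step `T(α,γ)` is strictly
increasing in the window size `γ`: for positive integers `γ₁ < γ₂`,
`T(α,γ₁) < T(α,γ₂)`. -/
theorem pipespec_throughput_strictMono_in_window (α : ℝ)
    (hα0 : 0 < α) (hα1 : α < 1) :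
    ∀ γ₁ γ₂ : ℕ, 1 ≤ γ₁ → γ₁ < γ₂ → pipeSpecT α γ₁ < pipeSpecT α γ₂ := by
  intro γ₁ γ₂ h1 h12
  set u₁ : ℝ := α - α ^ (γ₁ + 1) with hu1
  set u₂ : ℝ := α - α ^ (γ₂ + 1) with hu2
  have hpowlt : ∀ γ : ℕ, 1 ≤ γ → α ^ (γ + 1) < α := by
    intro γ hγ
    calc α ^ (γ + 1) ≤ α ^ 2 := by
          apply pow_le_pow_of_le_one hα0.le hα1.le; omega
      _ < α := by nlinarith
  have hu1pos : 0 < u₁ := by have := hpowlt γ₁ h1; simp [hu1]; linarith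
  have hu2pos : 0 < u₂ := by have := hpowlt γ₂ (by omega); simp [hu2]; linarith
  have hulst : u₁ < u₂ := by
    have : α ^ (γ₂ + 1) < α ^ (γ₁ + 1) :=
      pow_lt_pow_right_of_lt_one₀ hα0 hα1 (by omega)
    simp [hu1, hu2]; linarith
  have hform : ∀ γ : ℕ, pipeSpecT α γ =
      1 + α * (α - α ^ (γ + 1)) / ((1 - α) * (1 + (α - α ^ (γ + 1)))) := by
    intro γ
    have hp1 : α ^ (γ + 1) ≤ 1 := pow_le_one₀ hα0.le hα1.le
    have hd : 1 - α ^ (γ + 1) + α ≠ 0 := by nlinarith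
    have hd' : (1 : ℝ) + (α - α ^ (γ + 1)) ≠ 0 := by nlinarith
    have h1α : (1 : ℝ) - α ≠ 0 := by linarith
    simp only [pipeSpecT, rhoStar]
    field_simp
    ring
  rw [hform γ₁, hform γ₂]
  have h1α : (0 : ℝ) < 1 - α := by linarith
  have hd1 : (0 : ℝ) < (1 - α) * (1 + u₁) := by positivity
  have hd2 : (0 : ℝ) < (1 - α) * (1 + u₂) := by positivity
  have key : α * u₁ / ((1 - α) * (1 + u₁)) < α * u₂ / ((1 - α) * (1 + u₂)) := by
    rw [div_lt_div_iff₀ hd1 hd2]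
    nlinarith [mul_pos (mul_pos hα0 h1α) (sub_pos.mpr hulst)]
  linarith
end

section
/- Let α be a real number with 0 < α < 1, let γ be a positive integer, let c > 0 be a real number, let ρ* = α / (1 - α^(γ+1) + α), and let T = (1 - ρ*) + ρ*·(1 - α^(γ+1))/(1 - α) and SD = (1 - α^(γ+1)) / ((1 - α)·(γ/c + 1)). If SD ≤ 1 then T > SD. -/
/-- For `0 < α < 1`, a positive integer `γ` and a speed ratio `c > 0`, with
`ρ* = α / (1 - α^(γ+1) + α)`, PipeSpec throughput
`T = (1 - ρ*) + ρ*·(1 - α^(γ+1))/(1 - α)` and standard speculative decoding speedup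
`SD = (1 - α^(γ+1)) / ((1 - α)·(γ/c + 1))`: if `SD ≤ 1` then `T > SD`. -/
theorem pipespec_beats_slow_speculative (α : ℝ) (γ : ℕ) (c : ℝ)
    (hα0 : 0 < α) (hα1 : α < 1) (hγ : 1 ≤ γ) (hc : 0 < c)
    (hSD : (1 - α ^ (γ + 1)) / ((1 - α) * ((γ : ℝ) / c + 1)) ≤ 1) :
    (1 - α / (1 - α ^ (γ + 1) + α)) +
      (α / (1 - α ^ (γ + 1) + α)) * ((1 - α ^ (γ + 1)) / (1 - α)) >
      (1 - α ^ (γ + 1)) / ((1 - α) * ((γ : ℝ) / c + 1)) := by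
  have hpow : α ^ (γ + 1) < α := by
    calc α ^ (γ + 1) ≤ α ^ 2 := by
          apply pow_le_pow_of_le_one hα0.le hα1.le
          omega
      _ < α := by nlinarith
  have hpow1 : α ^ (γ + 1) < 1 := hpow.trans hα1
  have hden : 0 < 1 - α ^ (γ + 1) + α := by linarith
  have hρ : 0 < α / (1 - α ^ (γ + 1) + α) := div_pos hα0 hden
  have hS : 1 < (1 - α ^ (γ + 1)) / (1 - α) := by
    rw [lt_div_iff₀ (by linarith)]
    linarith
  have hT : 1 < (1 - α / (1 - α ^ (γ + 1) + α)) +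
      (α / (1 - α ^ (γ + 1) + α)) * ((1 - α ^ (γ + 1)) / (1 - α)) := by
    nlinarith
  linarith
end

section
/- Let γ be a positive integer. The function α ↦ α / (1 - α^(γ+1) + α) mapping (0,1) to ℝ is strictly increasing, tends to 0 as α → 0⁺, and tends to 1 as α → 1⁻. -/
open Filter

/-- For a positive integer `γ`, the steady-state verification probability
`ρ*(α) = α / (1 - α^(γ+1) + α)`, as a function of `α` on `(0,1)`, is strictly
increasing, tends to `0` as `α → 0⁺`, and tends to `1` as `α → 1⁻`. -/
theorem steady_state_strictMono_and_limits (γ : ℕ) (hγ : 1 ≤ γ) :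
    StrictMonoOn (fun α : ℝ => α / (1 - α ^ (γ + 1) + α)) (Set.Ioo 0 1) ∧
    Tendsto (fun α : ℝ => α / (1 - α ^ (γ + 1) + α))
      (nhdsWithin 0 (Set.Ioi 0)) (nhds 0) ∧
    Tendsto (fun α : ℝ => α / (1 - α ^ (γ + 1) + α))
      (nhdsWithin 1 (Set.Iio 1)) (nhds 1) := by
  have hD : ∀ α : ℝ, α ∈ Set.Ioo (0:ℝ) 1 → 0 < 1 - α ^ (γ + 1) + α := by
    rintro α ⟨h0, h1⟩
    have : α ^ (γ + 1) < 1 := pow_lt_one₀ h0.le h1 (by omega)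
    linarith
  refine ⟨?_, ?_, ?_⟩
  · rintro a ⟨ha0, ha1⟩ b ⟨hb0, hb1⟩ hab
    have hDa := hD a ⟨ha0, ha1⟩
    have hDb := hD b ⟨hb0, hb1⟩
    simp only
    rw [div_lt_div_iff₀ hDa hDb]
    have hpow : a ^ γ < b ^ γ := pow_lt_pow_left₀ hab ha0.le (by omega)
    have ea : a ^ (γ + 1) = a ^ γ * a := pow_succ a γ
    have eb : b ^ (γ + 1) = b ^ γ * b := pow_succ b γ
    nlinarith [mul_lt_mul_of_pos_left hpow (mul_pos ha0 hb0)]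
  · have hc : ContinuousAt (fun α : ℝ => α / (1 - α ^ (γ + 1) + α)) 0 := by
      apply ContinuousAt.div (by fun_prop) (by fun_prop)
      norm_num
    have h0 := hc.tendsto
    simp only [zero_pow (by omega : γ + 1 ≠ 0), sub_zero, add_zero, zero_div] at h0
    exact h0.mono_left nhdsWithin_le_nhds
  · have hc : ContinuousAt (fun α : ℝ => α / (1 - α ^ (γ + 1) + α)) 1 := by
      apply ContinuousAt.div (by fun_prop) (by fun_prop)
      norm_num
    have h1 := hc.tendsto
    simp only [one_pow, sub_self, zero_add, div_one] at h1
    exact h1.mono_left nhdsWithin_le_nhds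
end
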